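/- arXiv:2401.17350 — 5 statements merged into one kernel-verified Lean document; each statement's English description precedes it below -/
import Mathlib

section
/- Let N be a positive natural number, let K : Matrix (Fin N) (Fin N) ℝ be arbitrary, and let Ω : Matrix (Fin N) (Fin N) ℝ be positive definite. Then K * Kᵀ + Ω is positive definite (hence invertible), and the matrix 1 − Kᵀ * (K * Kᵀ + Ω)⁻¹ * K is positive semidefinite; equivalently, for every x : Fin N → ℝ one has x ⬝ᵥ ((Kᵀ * (K * Kᵀ + Ω)⁻¹ * K) *ᵥ x) ≤ x ⬝ᵥ x. -/
/-!
With `S = B Bᴴ + Ω`, the block matrix `[[S, B], [Bᴴ, 1]]` has Schur complement `S - B Bᴴ = Ω ≥ 0`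
with respect to its lower-right block, so it is positive semidefinite; its Schur complement with
respect to the upper-left block, `1 - Bᴴ S⁻¹ B`, is therefore positive semidefinite as well.
-/

open Matrix

namespace Matrix

variable {m n K : Type*} [Fintype m] [Fintype n] [DecidableEq m] [DecidableEq n]
  [Field K] [PartialOrder K] [StarRing K] [StarOrderedRing K]

theorem PosSemidef.one_sub_conjTranspose_mul_inv_mul {Ω : Matrix m m K} (hΩ : Ω.PosSemidef)
    (B : Matrix m n K) (hS : (B * Bᴴ + Ω).PosDef) :
    (1 - Bᴴ * (B * Bᴴ + Ω)⁻¹ * B).PosSemidef := by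
  have := hS.isUnit.invertible
  have : Invertible (1 : Matrix n n K) := invertibleOne
  have hblock : (fromBlocks (B * Bᴴ + Ω) B Bᴴ 1).PosSemidef := by
    rw [PosDef.fromBlocks₂₂ _ _ PosDef.one]
    simpa using hΩ
  exact (PosDef.fromBlocks₁₁ B 1 hS).mp hblock

end Matrix

theorem bl_contraction_lemma_general
    (N : ℕ) (K : Matrix (Fin N) (Fin N) ℝ)
    (Ω : Matrix (Fin N) (Fin N) ℝ) (hΩ : Ω.PosDef) :
    (K * Kᵀ + Ω).PosDef ∧ IsUnit (K * Kᵀ + Ω) ∧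
    ((1 : Matrix (Fin N) (Fin N) ℝ) - Kᵀ * (K * Kᵀ + Ω)⁻¹ * K).PosSemidef ∧
    (∀ x : Fin N → ℝ,
      x ⬝ᵥ ((Kᵀ * (K * Kᵀ + Ω)⁻¹ * K) *ᵥ x) ≤ x ⬝ᵥ x) := by
  have hKt : Kᴴ = Kᵀ := conjTranspose_eq_transpose_of_trivial K
  have hS : (K * Kᵀ + Ω).PosDef :=
    hKt ▸ PosDef.posSemidef_add (posSemidef_self_mul_conjTranspose K) hΩ
  have hcontr : (1 - Kᵀ * (K * Kᵀ + Ω)⁻¹ * K).PosSemidef :=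
    hKt ▸ hΩ.posSemidef.one_sub_conjTranspose_mul_inv_mul K (hKt ▸ hS)
  refine ⟨hS, hS.isUnit, hcontr, fun x => ?_⟩
  have hx := hcontr.dotProduct_mulVec_nonneg x
  rw [star_trivial, sub_mulVec, one_mulVec, dotProduct_sub] at hx
  exact sub_nonneg.mp hx

theorem bl_contraction_lemma
    (N : ℕ) (hN : 0 < N) (K : Matrix (Fin N) (Fin N) ℝ)
    (Ω : Matrix (Fin N) (Fin N) ℝ) (hΩ : Ω.PosDef) :
    (K * Kᵀ + Ω).PosDef ∧ IsUnit (K * Kᵀ + Ω) ∧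
    ((1 : Matrix (Fin N) (Fin N) ℝ) - Kᵀ * (K * Kᵀ + Ω)⁻¹ * K).PosSemidef ∧
    (∀ x : Fin N → ℝ,
      x ⬝ᵥ ((Kᵀ * (K * Kᵀ + Ω)⁻¹ * K) *ᵥ x) ≤ x ⬝ᵥ x) :=
  bl_contraction_lemma_general N K Ω hΩ
end

section
/- Let N be a positive natural number, let P : Matrix (Fin N) (Fin N) ℝ be arbitrary, let s : Fin N → ℝ satisfy s i ≥ 0 for all i, set Σ = Matrix.diagonal s, let Ω : Matrix (Fin N) (Fin N) ℝ be positive definite, and let τ : ℝ with τ > 0. Set J = τ • (P * Σ * Pᵀ) + Ω. Then the matrix (1 + τ) • (1 : Matrix (Fin N) (Fin N) ℝ) − τ^2 • (Pᵀ * J⁻¹ * P * Σ) is invertible (its determinant is nonzero). -/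
open Matrix

/-!
The matrix is `(1 + τ) • 1 - X * Y` with `X = τ² • Pᵀ J⁻¹` and `Y = P Σ`, and `c • 1 - X * Y`,
`c • 1 - Y * X` have the same determinant since `X * Y` and `Y * X` have the same characteristic
polynomial. With `A = τ • P Σ Pᵀ ⪰ 0` and `J = A + Ω` one has `Y * X = τ • A J⁻¹`, and
`(1 + τ) • 1 - τ • A J⁻¹ = (A + (1 + τ) • Ω) J⁻¹` is a product of two positive definite matrices.
-/

namespace Matrix

variable {n R : Type*} [Fintype n] [DecidableEq n]

theorem det_smul_one_sub_mul_comm [CommRing R] (c : R) (A B : Matrix n n R) :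
    (c • 1 - A * B).det = (c • 1 - B * A).det := by
  simp only [smul_one_eq_diagonal, ← scalar_apply, ← eval_charpoly, charpoly_mul_comm]

theorem smul_one_sub_smul_mul_inv_add [CommRing R] {A Ω : Matrix n n R} (h : IsUnit (A + Ω).det)
    (t : R) : (1 + t) • 1 - t • (A * (A + Ω)⁻¹) = (A + (1 + t) • Ω) * (A + Ω)⁻¹ := by
  have hfactor : A + (1 + t) • Ω = (1 + t) • (A + Ω) - t • A := by module
  rw [hfactor, sub_mul, smul_mul, smul_mul, mul_nonsing_inv _ h]

theorem isUnit_smul_one_sub_smul_mul_inv_add {A Ω : Matrix n n ℝ} (hA : A.PosSemidef)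
    (hΩ : Ω.PosDef) {t : ℝ} (ht : 0 ≤ t) : IsUnit ((1 + t) • 1 - t • (A * (A + Ω)⁻¹)) := by
  have hJ : (A + Ω).PosDef := PosDef.posSemidef_add hA hΩ
  rw [smul_one_sub_smul_mul_inv_add hJ.det_pos.ne'.isUnit t]
  exact (PosDef.posSemidef_add hA (hΩ.smul (by linarith))).isUnit.mul hJ.inv.isUnit

end Matrix

theorem second_factor_invertible_general
    (N : ℕ) (P : Matrix (Fin N) (Fin N) ℝ)
    (s : Fin N → ℝ) (hs : ∀ i, s i ≥ 0)
    (Ω : Matrix (Fin N) (Fin N) ℝ) (hΩ : Ω.PosDef)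
    (τ : ℝ) (hτ : τ > 0) :
    IsUnit ((1 + τ) • (1 : Matrix (Fin N) (Fin N) ℝ) -
      τ ^ 2 • (Pᵀ * (τ • (P * Matrix.diagonal s * Pᵀ) + Ω)⁻¹ * P *
        Matrix.diagonal s)) ∧
    ((1 + τ) • (1 : Matrix (Fin N) (Fin N) ℝ) -
      τ ^ 2 • (Pᵀ * (τ • (P * Matrix.diagonal s * Pᵀ) + Ω)⁻¹ * P *
        Matrix.diagonal s)).det ≠ 0 := by
  set A := τ • (P * diagonal s * Pᵀ)
  have hA : A.PosSemidef := by
    simpa using ((posSemidef_diagonal_iff.2 hs).mul_mul_conjTranspose_same P).smul hτ.le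
  have hsplit : τ ^ 2 • (Pᵀ * (A + Ω)⁻¹ * P * diagonal s)
      = τ ^ 2 • (Pᵀ * (A + Ω)⁻¹) * (P * diagonal s) := by
    simp only [smul_mul, Matrix.mul_assoc]
  have hswap : P * diagonal s * τ ^ 2 • (Pᵀ * (A + Ω)⁻¹) = τ • (A * (A + Ω)⁻¹) := by
    simp only [A, Matrix.mul_smul, smul_mul, smul_smul, Matrix.mul_assoc, sq]
  have hdet : IsUnit ((1 + τ) • 1 - τ ^ 2 • (Pᵀ * (A + Ω)⁻¹ * P * diagonal s)).det := by
    rw [hsplit, det_smul_one_sub_mul_comm, hswap, ← isUnit_iff_isUnit_det]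
    exact isUnit_smul_one_sub_smul_mul_inv_add hA hΩ hτ.le
  exact ⟨(isUnit_iff_isUnit_det _).2 hdet, hdet.ne_zero⟩

theorem second_factor_invertible
    (N : ℕ) (hN : 0 < N) (P : Matrix (Fin N) (Fin N) ℝ)
    (s : Fin N → ℝ) (hs : ∀ i, s i ≥ 0)
    (Ω : Matrix (Fin N) (Fin N) ℝ) (hΩ : Ω.PosDef)
    (τ : ℝ) (hτ : τ > 0) :
    IsUnit ((1 + τ) • (1 : Matrix (Fin N) (Fin N) ℝ) -
      τ ^ 2 • (Pᵀ * (τ • (P * Matrix.diagonal s * Pᵀ) + Ω)⁻¹ * P *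
        Matrix.diagonal s)) ∧
    ((1 + τ) • (1 : Matrix (Fin N) (Fin N) ℝ) -
      τ ^ 2 • (Pᵀ * (τ • (P * Matrix.diagonal s * Pᵀ) + Ω)⁻¹ * P *
        Matrix.diagonal s)).det ≠ 0 :=
  second_factor_invertible_general N P s hs Ω hΩ τ hτ
end

section
/- Let N be a positive natural number, let P : Matrix (Fin N) (Fin N) ℝ be arbitrary, let s : Fin N → ℝ satisfy s i ≥ 0 for all i, set Σ = Matrix.diagonal s, let Ω : Matrix (Fin N) (Fin N) ℝ be positive definite, let τ : ℝ with τ > 0, and let ε : ℝ with ε > 0. Set J = τ • (P * Σ * Pᵀ) + Ω. Then the regularized adjusted risk matrix Σ̂ = (1 + τ) • (Σ + ε • (1 : Matrix (Fin N) (Fin N) ℝ)) − τ^2 • ((Σ + ε • 1) * Pᵀ * J⁻¹ * P * Σ) is invertible (its determinant is nonzero). -/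
/-!
Write `Σ' = τΣ`, `J = PΣ'Pᵀ + Ω` and `G = PᵀJ⁻¹P`. Then
`Σ̂ = (Σ + εI) ((1 + τ)I - τ G Σ')`, and `Σ + εI` is positive definite. The matrix
`Σ' - Σ' G Σ'` is the Schur complement of `J` in `[[Σ', Σ'Pᵀ], [PΣ', J]] = L diag(Σ', Ω) Lᵀ`
with `L = [[I, 0], [P, I]]`, hence positive semidefinite. So if `(1 + τ)x = τ G Σ' x`, then
`(1 + τ) xᵀΣ'x = τ xᵀΣ'GΣ'x ≤ τ xᵀΣ'x`, which forces `Σ'x = 0` and then `x = 0`.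
-/

open scoped ComplexOrder

namespace Matrix

variable {m n 𝕜 : Type*} [Fintype m] [Fintype n] [DecidableEq m] [DecidableEq n] [RCLike 𝕜]

theorem PosSemidef.sub_mul_conjTranspose_mul_inv_mul_mul {D : Matrix n n 𝕜} (hD : D.PosSemidef)
    (P : Matrix m n 𝕜) {Ω : Matrix m m 𝕜} (hΩ : Ω.PosDef) :
    (D - D * Pᴴ * (P * D * Pᴴ + Ω)⁻¹ * P * D).PosSemidef := by
  have hJ : (P * D * Pᴴ + Ω).PosDef := PosDef.posSemidef_add (hD.mul_mul_conjTranspose_same P) hΩ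
  have hblock : (fromBlocks D 0 0 Ω).PosSemidef := by
    have := hΩ.isUnit.invertible
    simpa using (PosDef.fromBlocks₂₂ D (0 : Matrix n m 𝕜) hΩ).mpr (by simpa using hD)
  have hfactor : fromBlocks D (D * Pᴴ) (D * Pᴴ)ᴴ (P * D * Pᴴ + Ω) =
      fromBlocks 1 0 P 1 * fromBlocks D 0 0 Ω * (fromBlocks 1 0 P 1)ᴴ := by
    simp [fromBlocks_conjTranspose, fromBlocks_multiply, hD.1.eq, Matrix.mul_assoc]
  have := hJ.isUnit.invertible
  have hschur := (PosDef.fromBlocks₂₂ D (D * Pᴴ) hJ).mp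
    (hfactor ▸ hblock.mul_mul_conjTranspose_same _)
  simpa [hD.1.eq, Matrix.mul_assoc] using hschur

theorem isUnit_smul_one_sub_smul_mul {D G : Matrix n n ℝ} (hD : D.PosSemidef)
    (hDGD : (D - D * G * D).PosSemidef) {a b : ℝ} (hb : 0 ≤ b) (hba : b < a) :
    IsUnit (a • 1 - b • (G * D)) := by
  rw [← mulVec_injective_iff_isUnit, ← coe_mulVecLin, injective_iff_map_eq_zero]
  intro x hx
  replace hx : a • x = b • (G *ᵥ D *ᵥ x) := by
    simpa [sub_mulVec, smul_mulVec, mulVec_mulVec, sub_eq_zero] using hx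
  have hquad : a * (x ⬝ᵥ D *ᵥ x) ≤ b * (x ⬝ᵥ D *ᵥ x) := by
    have hle : x ⬝ᵥ (D * G * D) *ᵥ x ≤ x ⬝ᵥ D *ᵥ x := by
      simpa [sub_mulVec] using hDGD.dotProduct_mulVec_nonneg x
    calc a * (x ⬝ᵥ D *ᵥ x) = b * (x ⬝ᵥ (D * G * D) *ᵥ x) := by
          simpa [mulVec_smul, ← mulVec_mulVec] using congrArg (x ⬝ᵥ D *ᵥ ·) hx
      _ ≤ b * (x ⬝ᵥ D *ᵥ x) := mul_le_mul_of_nonneg_left hle hb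
  have hDx : D *ᵥ x = 0 := by
    refine (hD.dotProduct_mulVec_zero_iff x).mp ?_
    have hnonneg := hD.dotProduct_mulVec_nonneg x
    simp only [star_trivial] at hnonneg ⊢
    nlinarith
  simpa [hDx, (hb.trans_lt hba).ne'] using hx

end Matrix

open Matrix

theorem regularization_calibration_general
    (N : ℕ) (P : Matrix (Fin N) (Fin N) ℝ)
    (s : Fin N → ℝ) (hs : ∀ i, s i ≥ 0)
    (Ω : Matrix (Fin N) (Fin N) ℝ) (hΩ : Ω.PosDef)
    (τ : ℝ) (hτ : τ > 0) (ε : ℝ) (hε : ε > 0) :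
    IsUnit ((1 + τ) • (Matrix.diagonal s + ε • (1 : Matrix (Fin N) (Fin N) ℝ)) -
      τ ^ 2 • ((Matrix.diagonal s + ε • (1 : Matrix (Fin N) (Fin N) ℝ)) * Pᵀ *
        (τ • (P * Matrix.diagonal s * Pᵀ) + Ω)⁻¹ * P * Matrix.diagonal s)) ∧
    ((1 + τ) • (Matrix.diagonal s + ε • (1 : Matrix (Fin N) (Fin N) ℝ)) -
      τ ^ 2 • ((Matrix.diagonal s + ε • (1 : Matrix (Fin N) (Fin N) ℝ)) * Pᵀ *
        (τ • (P * Matrix.diagonal s * Pᵀ) + Ω)⁻¹ * P * Matrix.diagonal s)).det ≠ 0 := by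
  set D := Matrix.diagonal s
  set A := D + ε • (1 : Matrix (Fin N) (Fin N) ℝ)
  set J := τ • (P * D * Pᵀ) + Ω
  have hD : D.PosSemidef := PosSemidef.diagonal hs
  have hτD : (τ • D).PosSemidef := hD.smul hτ.le
  have hJ : J = P * (τ • D) * Pᴴ + Ω := by
    simp [J, conjTranspose_eq_transpose_of_trivial]
  have hA : IsUnit A := (PosDef.posSemidef_add hD (PosDef.one.smul hε)).isUnit
  have hB : IsUnit ((1 + τ) • 1 - τ • (Pᵀ * J⁻¹ * P * (τ • D))) := by
    refine isUnit_smul_one_sub_smul_mul hτD ?_ hτ.le (lt_one_add τ)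
    simpa [hJ, conjTranspose_eq_transpose_of_trivial, Matrix.mul_assoc] using
      hτD.sub_mul_conjTranspose_mul_inv_mul_mul P hΩ
  have hfactor : (1 + τ) • A - τ ^ 2 • (A * Pᵀ * J⁻¹ * P * D) =
      A * ((1 + τ) • 1 - τ • (Pᵀ * J⁻¹ * P * (τ • D))) := by
    simp only [Matrix.mul_sub, Matrix.mul_smul, Matrix.mul_one, smul_smul, Matrix.mul_assoc, sq]
  rw [hfactor]
  have hAB := hA.mul hB
  exact ⟨hAB, ((isUnit_iff_isUnit_det _).mp hAB).ne_zero⟩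

theorem regularization_calibration
    (N : ℕ) (hN : 0 < N) (P : Matrix (Fin N) (Fin N) ℝ)
    (s : Fin N → ℝ) (hs : ∀ i, s i ≥ 0)
    (Ω : Matrix (Fin N) (Fin N) ℝ) (hΩ : Ω.PosDef)
    (τ : ℝ) (hτ : τ > 0) (ε : ℝ) (hε : ε > 0) :
    IsUnit ((1 + τ) • (Matrix.diagonal s + ε • (1 : Matrix (Fin N) (Fin N) ℝ)) -
      τ ^ 2 • ((Matrix.diagonal s + ε • (1 : Matrix (Fin N) (Fin N) ℝ)) * Pᵀ *
        (τ • (P * Matrix.diagonal s * Pᵀ) + Ω)⁻¹ * P * Matrix.diagonal s)) ∧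
    ((1 + τ) • (Matrix.diagonal s + ε • (1 : Matrix (Fin N) (Fin N) ℝ)) -
      τ ^ 2 • ((Matrix.diagonal s + ε • (1 : Matrix (Fin N) (Fin N) ℝ)) * Pᵀ *
        (τ • (P * Matrix.diagonal s * Pᵀ) + Ω)⁻¹ * P * Matrix.diagonal s)).det ≠ 0 :=
  regularization_calibration_general N P s hs Ω hΩ τ hτ ε hε
end

section
/- Let N be a positive natural number, let Σ, Ω : Matrix (Fin N) (Fin N) ℝ be positive definite, let τ : ℝ with τ > 0, let P : Matrix (Fin N) (Fin N) ℝ be arbitrary, and let Π, Q : Fin N → ℝ. Then the matrix (τ • Σ)⁻¹ + Pᵀ * Ω⁻¹ * P is positive definite (hence invertible), and the Black–Litterman posterior mean identity holds: Π + (τ • Σ) *ᵥ (Pᵀ *ᵥ ((τ • (P * Σ * Pᵀ) + Ω)⁻¹ *ᵥ (Q − P *ᵥ Π))) = ((τ • Σ)⁻¹ + Pᵀ * Ω⁻¹ * P)⁻¹ *ᵥ ((τ • Σ)⁻¹ *ᵥ Π + Pᵀ *ᵥ (Ω⁻¹ *ᵥ Q)). -/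
open Matrix

/-!
Write `A = T⁻¹ + Pᵀ Ω⁻¹ P` and `M = P T Pᵀ + Ω` with `T = τ Σ`. Both are positive definite, and the
push-through identity `A T Pᵀ = Pᵀ Ω⁻¹ M` turns `A` applied to the mixed estimate into
`T⁻¹ Π + Pᵀ Ω⁻¹ Q`; inverting `A` gives the posterior mean.
-/

namespace Matrix

variable {m n R : Type*} [Fintype m] [Fintype n] [DecidableEq m] [DecidableEq n] [CommRing R]
  {T : Matrix n n R} {Ω : Matrix m m R}

theorem inv_add_mul_inv_mul_mul_mul_eq (hT : IsUnit T) (hΩ : IsUnit Ω)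
    (U : Matrix n m R) (P : Matrix m n R) :
    (T⁻¹ + U * Ω⁻¹ * P) * T * U = U * Ω⁻¹ * (P * T * U + Ω) := by
  rw [Matrix.add_mul, Matrix.add_mul, nonsing_inv_mul T ((isUnit_iff_isUnit_det T).mp hT),
    Matrix.one_mul, Matrix.mul_add, nonsing_inv_mul_cancel_right Ω U ((isUnit_iff_isUnit_det Ω).mp hΩ)]
  simp only [Matrix.mul_assoc, add_comm]

theorem inv_add_mul_inv_mul_mulVec_add_mulVec_inv_mulVec_sub (hT : IsUnit T) (hΩ : IsUnit Ω)
    (U : Matrix n m R) (P : Matrix m n R) (hM : IsUnit (P * T * U + Ω)) (π : n → R) (Q : m → R) :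
    (T⁻¹ + U * Ω⁻¹ * P) *ᵥ (π + T *ᵥ (U *ᵥ ((P * T * U + Ω)⁻¹ *ᵥ (Q - P *ᵥ π)))) =
      T⁻¹ *ᵥ π + U *ᵥ (Ω⁻¹ *ᵥ Q) := by
  rw [mulVec_add, mulVec_mulVec, mulVec_mulVec, mulVec_mulVec,
    inv_add_mul_inv_mul_mul_mul_eq hT hΩ, Matrix.mul_assoc (U * Ω⁻¹),
    mul_nonsing_inv _ ((isUnit_iff_isUnit_det _).mp hM), Matrix.mul_one, add_mulVec, mulVec_sub,
    ← mulVec_mulVec π (U * Ω⁻¹), ← mulVec_mulVec, ← mulVec_mulVec]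
  abel

theorem add_mulVec_inv_mulVec_sub_eq_inv_mulVec (hT : IsUnit T) (hΩ : IsUnit Ω)
    (U : Matrix n m R) (P : Matrix m n R) (hM : IsUnit (P * T * U + Ω))
    (hA : IsUnit (T⁻¹ + U * Ω⁻¹ * P)) (π : n → R) (Q : m → R) :
    π + T *ᵥ (U *ᵥ ((P * T * U + Ω)⁻¹ *ᵥ (Q - P *ᵥ π))) =
      (T⁻¹ + U * Ω⁻¹ * P)⁻¹ *ᵥ (T⁻¹ *ᵥ π + U *ᵥ (Ω⁻¹ *ᵥ Q)) := by
  rw [← inv_add_mul_inv_mul_mulVec_add_mulVec_inv_mulVec_sub hT hΩ U P hM,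
    mulVec_mulVec _ (T⁻¹ + U * Ω⁻¹ * P)⁻¹, nonsing_inv_mul _ ((isUnit_iff_isUnit_det _).mp hA),
    one_mulVec]

end Matrix

theorem bl_posterior_mean_identity_general
    (N : ℕ)
    (S Ω : Matrix (Fin N) (Fin N) ℝ) (hS : S.PosDef) (hΩ : Ω.PosDef)
    (τ : ℝ) (hτ : τ > 0) (P : Matrix (Fin N) (Fin N) ℝ)
    (pi Q : Fin N → ℝ) :
    ((τ • S)⁻¹ + Pᵀ * Ω⁻¹ * P).PosDef ∧
    IsUnit ((τ • S)⁻¹ + Pᵀ * Ω⁻¹ * P) ∧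
    pi + (τ • S) *ᵥ (Pᵀ *ᵥ ((τ • (P * S * Pᵀ) + Ω)⁻¹ *ᵥ (Q - P *ᵥ pi))) =
      ((τ • S)⁻¹ + Pᵀ * Ω⁻¹ * P)⁻¹ *ᵥ
        ((τ • S)⁻¹ *ᵥ pi + Pᵀ *ᵥ (Ω⁻¹ *ᵥ Q)) := by
  have hT : (τ • S).PosDef := hS.smul hτ
  have hA : ((τ • S)⁻¹ + Pᵀ * Ω⁻¹ * P).PosDef := by
    simpa using hT.inv.add_posSemidef (hΩ.inv.posSemidef.conjTranspose_mul_mul_same P)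
  have hM : (P * (τ • S) * Pᵀ + Ω).PosDef := by
    simpa using PosDef.posSemidef_add (hT.posSemidef.mul_mul_conjTranspose_same P) hΩ
  refine ⟨hA, hA.isUnit, ?_⟩
  rw [← Matrix.smul_mul, ← Matrix.mul_smul]
  exact add_mulVec_inv_mulVec_sub_eq_inv_mulVec hT.isUnit hΩ.isUnit Pᵀ P hM.isUnit hA.isUnit pi Q

theorem bl_posterior_mean_identity
    (N : ℕ) (hN : 0 < N)
    (S Ω : Matrix (Fin N) (Fin N) ℝ) (hS : S.PosDef) (hΩ : Ω.PosDef)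
    (τ : ℝ) (hτ : τ > 0) (P : Matrix (Fin N) (Fin N) ℝ)
    (pi Q : Fin N → ℝ) :
    ((τ • S)⁻¹ + Pᵀ * Ω⁻¹ * P).PosDef ∧
    IsUnit ((τ • S)⁻¹ + Pᵀ * Ω⁻¹ * P) ∧
    pi + (τ • S) *ᵥ (Pᵀ *ᵥ ((τ • (P * S * Pᵀ) + Ω)⁻¹ *ᵥ (Q - P *ᵥ pi))) =
      ((τ • S)⁻¹ + Pᵀ * Ω⁻¹ * P)⁻¹ *ᵥ
        ((τ • S)⁻¹ *ᵥ pi + Pᵀ *ᵥ (Ω⁻¹ *ᵥ Q)) :=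
  bl_posterior_mean_identity_general N S Ω hS hΩ τ hτ P pi Q
end

section
/- Let N be a positive natural number, let Σ, Ω : Matrix (Fin N) (Fin N) ℝ be positive definite, let τ : ℝ with τ > 0, and let P : Matrix (Fin N) (Fin N) ℝ be arbitrary. Then the Black–Litterman posterior covariance identity holds: (1 + τ) • Σ − τ^2 • (Σ * Pᵀ * (τ • (P * Σ * Pᵀ) + Ω)⁻¹ * P * Σ) = Σ + ((τ • Σ)⁻¹ + Pᵀ * Ω⁻¹ * P)⁻¹. -/
/-!
By the Woodbury identity the Bayesian posterior covariance `((τΣ)⁻¹ + PᵀΩ⁻¹P)⁻¹` equals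
`τΣ - τΣPᵀ(PτΣPᵀ + Ω)⁻¹PτΣ`; all inverses involved exist because `τΣ`, `Ω` and
`PτΣPᵀ + Ω` are positive definite. Adding `Σ` gives the mixed form.
-/

open Matrix

namespace Matrix

theorem inv_add_mul_inv_mul_inv_eq_sub {m n α : Type*} [Fintype m] [Fintype n] [DecidableEq m]
    [DecidableEq n] [CommRing α] (A : Matrix n n α) (U : Matrix n m α) (B : Matrix m m α)
    (V : Matrix m n α) (hA : IsUnit A) (hB : IsUnit B) (hVAUB : IsUnit (V * A * U + B)) :
    (A⁻¹ + U * B⁻¹ * V)⁻¹ = A - A * U * (V * A * U + B)⁻¹ * V * A := by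
  have hA' : A⁻¹⁻¹ = A := nonsing_inv_nonsing_inv A ((isUnit_iff_isUnit_det A).mp hA)
  have hB' : B⁻¹⁻¹ = B := nonsing_inv_nonsing_inv B ((isUnit_iff_isUnit_det B).mp hB)
  rw [add_mul_mul_inv_eq_sub A⁻¹ U B⁻¹ V (isUnit_nonsing_inv_iff.mpr hA)
    (isUnit_nonsing_inv_iff.mpr hB) (by rwa [hA', hB', add_comm]), hA', hB', add_comm B]

theorem PosSemidef.posDef_mul_mul_transpose_add {m n : Type*} [Fintype m] [Fintype n]
    {A : Matrix n n ℝ} {B : Matrix m m ℝ} (hA : A.PosSemidef) (hB : B.PosDef)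
    (P : Matrix m n ℝ) : (P * A * Pᵀ + B).PosDef :=
  PosDef.posSemidef_add (by simpa using hA.mul_mul_conjTranspose_same P) hB

end Matrix

theorem bl_posterior_covariance_identity_general
    (N : ℕ)
    (S Ω : Matrix (Fin N) (Fin N) ℝ) (hS : S.PosDef) (hΩ : Ω.PosDef)
    (τ : ℝ) (hτ : τ > 0) (P : Matrix (Fin N) (Fin N) ℝ) :
    (1 + τ) • S - τ ^ 2 • (S * Pᵀ * (τ • (P * S * Pᵀ) + Ω)⁻¹ * P * S) =
      S + ((τ • S)⁻¹ + Pᵀ * Ω⁻¹ * P)⁻¹ := by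
  have hτS : (τ • S).PosDef := hS.smul hτ
  have hscale : P * (τ • S) * Pᵀ = τ • (P * S * Pᵀ) := by
    rw [mul_smul_comm, smul_mul_assoc]
  rw [inv_add_mul_inv_mul_inv_eq_sub _ _ _ _ hτS.isUnit hΩ.isUnit
      (hτS.posSemidef.posDef_mul_mul_transpose_add hΩ P).isUnit, hscale]
  simp only [smul_mul_assoc, mul_smul_comm, smul_smul, ← pow_two, add_smul, one_smul]
  abel

theorem bl_posterior_covariance_identity
    (N : ℕ) (hN : 0 < N)
    (S Ω : Matrix (Fin N) (Fin N) ℝ) (hS : S.PosDef) (hΩ : Ω.PosDef)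
    (τ : ℝ) (hτ : τ > 0) (P : Matrix (Fin N) (Fin N) ℝ) :
    (1 + τ) • S - τ ^ 2 • (S * Pᵀ * (τ • (P * S * Pᵀ) + Ω)⁻¹ * P * S) =
      S + ((τ • S)⁻¹ + Pᵀ * Ω⁻¹ * P)⁻¹ :=
  bl_posterior_covariance_identity_general N S Ω hS hΩ τ hτ P
end
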